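/- arXiv:1304.4290 — 2 statements merged into one kernel-verified Lean document; each statement's English description precedes it below -/
import Mathlib

section
/- Let S be a numerical semigroup with multiplicity m, Frobenius number f, minimally generated by g_1 < ... < g_ν, and let α_i = max{h | h·g_i ∈ Ap(S,m)} for i ≥ 2. Then Ap(S,m) = {Σ_{i=2}^{ν} λ_i g_i | 0 ≤ λ_i ≤ α_i} (α-rectangularity) if and only if f + m = Σ_{i=2}^{ν} α_i g_i. -/
/-- A numerical semigroup: a subset of ℕ containing 0, closed under addition,
with finite complement. -/
structure NumSgp where
  carrier : Set ℕ
  zero_mem : 0 ∈ carrier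
  add_mem : ∀ a ∈ carrier, ∀ b ∈ carrier, a + b ∈ carrier
  cofinite : Set.Finite carrierᶜ

namespace NumSgp

/-- The multiplicity: the smallest positive element. -/
noncomputable def mult (S : NumSgp) : ℕ := sInf {s | s ∈ S.carrier ∧ s ≠ 0}

/-- The Apéry set of `S` with respect to `n`: elements `s ∈ S` with `s - n ∉ S`. -/
def Apery (S : NumSgp) (n : ℕ) : Set ℕ :=
  {s | s ∈ S.carrier ∧ ¬ ∃ t ∈ S.carrier, s = t + n}

/-- `s ⪯ t` : there is `u ∈ S` with `t = s + u`. -/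
def sle (S : NumSgp) (s t : ℕ) : Prop := ∃ u ∈ S.carrier, t = s + u

/-- Membership for integers. -/
def memZ (S : NumSgp) (x : ℤ) : Prop := ∃ n ∈ S.carrier, (n : ℤ) = x

/-- `f` is the Frobenius number of `S`: the largest integer not in `S`. -/
def IsFrob (S : NumSgp) (f : ℤ) : Prop := ¬ S.memZ f ∧ ∀ x : ℤ, f < x → S.memZ x

/-- `S` is symmetric: `x ∈ S ↔ f - x ∉ S` for all integers `x`. -/
def Symm (S : NumSgp) : Prop :=
  ∃ f : ℤ, S.IsFrob f ∧ ∀ x : ℤ, S.memZ x ↔ ¬ S.memZ (f - x)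

/-- `s` is a minimal generator (irreducible element) of `S`. -/
def IsMinGen (S : NumSgp) (s : ℕ) : Prop :=
  s ∈ S.carrier ∧ s ≠ 0 ∧
    ¬ ∃ a ∈ S.carrier, ∃ b ∈ S.carrier, a ≠ 0 ∧ b ≠ 0 ∧ s = a + b

/-- `g : Fin ν → ℕ` enumerates the minimal generators in increasing order. -/
def MinGens (S : NumSgp) {ν : ℕ} (g : Fin ν → ℕ) : Prop :=
  StrictMono g ∧ Set.range g = {s | S.IsMinGen s}

/-- The order of `s`: the maximal total coefficient sum over representations of `s`
in terms of the generators `g`. -/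
noncomputable def ord {ν : ℕ} (g : Fin ν → ℕ) (s : ℕ) : ℕ :=
  sSup {k | ∃ lam : Fin ν → ℕ, s = ∑ i, lam i * g i ∧ k = ∑ i, lam i}

/-- `s` has a unique representation in terms of the generators `g`. -/
def UniqueRep {ν : ℕ} (g : Fin ν → ℕ) (s : ℕ) : Prop :=
  ∃! lam : Fin ν → ℕ, s = ∑ i, lam i * g i

/-- `s` has a unique maximal representation in terms of the generators `g`. -/
def UniqueMaxRep {ν : ℕ} (g : Fin ν → ℕ) (s : ℕ) : Prop :=
  ∃! lam : Fin ν → ℕ, s = ∑ i, lam i * g i ∧ ∑ i, lam i = ord g s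

/-- The submonoid of ℕ generated by the generators `g j` with `j < i`. -/
def genBy {ν : ℕ} (g : Fin ν → ℕ) (i : Fin ν) : Set ℕ :=
  {s | ∃ lam : Fin ν → ℕ, (∀ j, ¬ j < i → lam j = 0) ∧ s = ∑ j, lam j * g j}

/-- `τ_i = min {h | h·g_i ∈ ⟨g_1, …, g_{i-1}⟩} - 1`. -/
noncomputable def tau {ν : ℕ} (g : Fin ν → ℕ) (i : Fin ν) : ℕ :=
  sInf {h | h * g i ∈ genBy g i} - 1

/-- `α_i = max {h | h·g_i ∈ Ap(S, m)}`. -/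
noncomputable def alpha (S : NumSgp) {ν : ℕ} (g : Fin ν → ℕ) (i : Fin ν) : ℕ :=
  sSup {h | h * g i ∈ S.Apery S.mult}

/-- `β_i = max {h | h·g_i ∈ Ap(S, m) and ord(h·g_i) = h}`. -/
noncomputable def beta (S : NumSgp) {ν : ℕ} (g : Fin ν → ℕ) (i : Fin ν) : ℕ :=
  sSup {h | h * g i ∈ S.Apery S.mult ∧ ord g (h * g i) = h}

/-- `γ_i`. -/
noncomputable def gamma (S : NumSgp) {ν : ℕ} (g : Fin ν → ℕ) (i : Fin ν) : ℕ :=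
  sSup {h | h * g i ∈ S.Apery S.mult ∧ ord g (h * g i) = h ∧ UniqueMaxRep g (h * g i)}

/-- The "rectangle" `{Σ_{i ≥ 2} λ_i g_i | 0 ≤ λ_i ≤ c_i}` (indices here start at 0,
the first generator does not appear). -/
def rect {ν : ℕ} (g c : Fin ν → ℕ) : Set ℕ :=
  {s | ∃ lam : Fin ν → ℕ, (∀ i, i.val = 0 → lam i = 0) ∧ (∀ i, lam i ≤ c i) ∧
    s = ∑ i, lam i * g i}

/-- `Π_{i ≥ 2} (c_i + 1)` (the first index excluded). -/
def piProd {ν : ℕ} (c : Fin ν → ℕ) : ℕ :=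
  ∏ i ∈ Finset.univ.filter (fun i : Fin ν => i.val ≠ 0), (c i + 1)

/-- `S` is telescopic. -/
def Telescopic (S : NumSgp) : Prop :=
  ∃ (ν : ℕ) (g : Fin ν → ℕ), S.MinGens g ∧ S.Apery S.mult = rect g (tau g)

/-- `S` has α-rectangular Apéry set. -/
def AlphaRect (S : NumSgp) : Prop :=
  ∃ (ν : ℕ) (g : Fin ν → ℕ), S.MinGens g ∧ S.Apery S.mult = rect g (S.alpha g)

/-- `S` has γ-rectangular Apéry set. -/
def GammaRect (S : NumSgp) : Prop :=
  ∃ (ν : ℕ) (g : Fin ν → ℕ), S.MinGens g ∧ S.Apery S.mult = rect g (S.gamma g)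

/-- `S` is associated to a plane branch: telescopic and `(τ_i+1) g_i < g_{i+1}`. -/
def PlaneBranch (S : NumSgp) : Prop :=
  ∃ (ν : ℕ) (g : Fin ν → ℕ), S.MinGens g ∧ S.Apery S.mult = rect g (tau g) ∧
    ∀ i : Fin ν, 1 ≤ i.val → ∀ h : i.val + 1 < ν, (tau g i + 1) * g i < g ⟨i.val + 1, h⟩

/-- `S` is free: for some rearrangement `n` of the minimal generators,
`Ap(S, n_1) = {Σ_{i ≥ 2} λ_i n_i | 0 ≤ λ_i ≤ φ_i}`. -/
def Free (S : NumSgp) : Prop :=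
  ∃ (ν : ℕ) (hν : 0 < ν) (n : Fin ν → ℕ), Function.Injective n ∧
    Set.range n = {s | S.IsMinGen s} ∧ S.Apery (n ⟨0, hν⟩) = rect n (tau n)

/-- The kernel congruence of the factorization map `λ ↦ Σ λ_i g_i`. -/
def kerCon {ν : ℕ} (g : Fin ν → ℕ) : AddCon (Fin ν → ℕ) where
  r a b := ∑ i, a i * g i = ∑ i, b i * g i
  iseqv := ⟨fun _ => rfl, Eq.symm, Eq.trans⟩
  add' := by
    intro a b c d h1 h2
    simp only [Pi.add_apply, add_mul, Finset.sum_add_distrib]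
    exact congrArg₂ (· + ·) h1 h2

/-- `S` is a complete intersection: it admits a presentation of cardinality `ν - 1`
(the cardinality of any minimal presentation equals `ν - 1`). -/
def CompleteIntersection (S : NumSgp) : Prop :=
  ∃ (ν : ℕ) (g : Fin ν → ℕ), S.MinGens g ∧
    ∃ ρ : Finset ((Fin ν → ℕ) × (Fin ν → ℕ)), ρ.card = ν - 1 ∧
      addConGen (fun a b => (a, b) ∈ ρ) = kerCon g

end NumSgp

open NumSgp

/-!
Every element `w` of `Ap(S,m)` is a sum `Σ λ_i g_i`, and each summand `λ_i g_i` divides `w` in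
the order `⪯` of `S`, hence lies in `Ap(S,m)` again; so `λ_1 = 0` and `λ_i ≤ α_i`, i.e. `Ap(S,m)`
always lies in the α-rectangle. The rectangle consists of the `⪯`-divisors of its corner
`A = Σ α_i g_i`, and `Ap(S,m)` is closed under `⪯`-divisors, so equality holds iff `A ∈ Ap(S,m)`.
As `f + m` is the largest element of `Ap(S,m)` and lies in the rectangle, this means `A = f + m`.
-/

namespace NumSgp

open Finset

section Basic

variable (S : NumSgp)

lemma exists_mem_ne_zero : ∃ s ∈ S.carrier, s ≠ 0 := by
  obtain ⟨B, hB⟩ := S.cofinite.bddAbove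
  refine ⟨B + 1, ?_, by omega⟩
  by_contra h
  have : B + 1 ≤ B := hB h
  omega

lemma mult_mem : S.mult ∈ S.carrier := (Nat.sInf_mem S.exists_mem_ne_zero).1

lemma mult_ne_zero : S.mult ≠ 0 := (Nat.sInf_mem S.exists_mem_ne_zero).2

variable {S}

lemma mult_le {s : ℕ} (hs : s ∈ S.carrier) (h0 : s ≠ 0) : S.mult ≤ s :=
  Nat.sInf_le ⟨hs, h0⟩

lemma mul_mem {s : ℕ} (n : ℕ) (hs : s ∈ S.carrier) : n * s ∈ S.carrier := by
  induction n with
  | zero => simpa using S.zero_mem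
  | succ k ih => rw [Nat.succ_mul]; exact S.add_mem _ ih _ hs

lemma sum_mem {ι : Type*} (t : Finset ι) {f : ι → ℕ} (h : ∀ i ∈ t, f i ∈ S.carrier) :
    ∑ i ∈ t, f i ∈ S.carrier :=
  Finset.sum_induction f (· ∈ S.carrier) (fun a b ha hb => S.add_mem a ha b hb) S.zero_mem h

lemma sum_mul_mem {ι : Type*} {g : ι → ℕ} (hg : ∀ i, g i ∈ S.carrier) (t : Finset ι)
    (c : ι → ℕ) : ∑ i ∈ t, c i * g i ∈ S.carrier :=
  sum_mem t fun i _ => mul_mem (c i) (hg i)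

variable (S) in
lemma isMinGen_mult : S.IsMinGen S.mult := by
  refine ⟨S.mult_mem, S.mult_ne_zero, ?_⟩
  rintro ⟨a, ha, b, hb, ha0, hb0, hab⟩
  have := mult_le ha ha0
  have := mult_le hb hb0
  omega

end Basic

section Apery

variable {S : NumSgp} {f : ℤ}

lemma mem_apery_of_sle {s t : ℕ} (hs : s ∈ S.carrier) (hst : S.sle s t)
    (ht : t ∈ S.Apery S.mult) : s ∈ S.Apery S.mult := by
  obtain ⟨u, hu, rfl⟩ := hst
  refine ⟨hs, ?_⟩
  rintro ⟨r, hr, rfl⟩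
  exact ht.2 ⟨r + u, S.add_mem r hr u hu, by omega⟩

lemma eq_zero_of_mul_mult_mem_apery {n : ℕ} (h : n * S.mult ∈ S.Apery S.mult) : n = 0 := by
  by_contra hn
  obtain ⟨k, rfl⟩ := Nat.exists_eq_succ_of_ne_zero hn
  exact h.2 ⟨k * S.mult, mul_mem k S.mult_mem, Nat.succ_mul k S.mult⟩

lemma IsFrob.add_mult_nonneg (hf : S.IsFrob f) : 0 ≤ f + S.mult := by
  by_contra h
  have := S.mult_ne_zero
  obtain ⟨n, _, hn⟩ := hf.2 (-1) (by omega)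
  omega

lemma IsFrob.le_add_mult (hf : S.IsFrob f) {w : ℕ} (hw : w ∈ S.Apery S.mult) :
    (w : ℤ) ≤ f + S.mult := by
  by_contra h
  obtain ⟨t, ht, htw⟩ := hf.2 ((w : ℤ) - S.mult) (by omega)
  exact hw.2 ⟨t, ht, by omega⟩

lemma IsFrob.toNat_add_mult_mem_apery (hf : S.IsFrob f) :
    (f + S.mult).toNat ∈ S.Apery S.mult := by
  have h0 := hf.add_mult_nonneg
  obtain ⟨n, hn, hn'⟩ := hf.2 (f + S.mult) (by have := S.mult_ne_zero; omega)
  refine ⟨by rwa [show (f + S.mult).toNat = n by omega], ?_⟩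
  rintro ⟨t, ht, hts⟩
  exact hf.1 ⟨t, ht, by omega⟩

end Apery

section MinGens

variable {S : NumSgp} {ν : ℕ} {g : Fin ν → ℕ}

lemma MinGens.isMinGen (hg : S.MinGens g) (i : Fin ν) : S.IsMinGen (g i) := by
  have : g i ∈ Set.range g := ⟨i, rfl⟩
  rwa [hg.2] at this

lemma MinGens.mem (hg : S.MinGens g) (i : Fin ν) : g i ∈ S.carrier := (hg.isMinGen i).1

lemma MinGens.ne_zero (hg : S.MinGens g) (i : Fin ν) : g i ≠ 0 := (hg.isMinGen i).2.1

lemma MinGens.eq_mult (hg : S.MinGens g) {i : Fin ν} (hi : i.val = 0) : g i = S.mult := by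
  obtain ⟨j, hj⟩ : S.mult ∈ Set.range g := by rw [hg.2]; exact S.isMinGen_mult
  have : g i ≤ g j := hg.1.monotone (by simp [Fin.le_def, hi])
  have := mult_le (hg.mem i) (hg.ne_zero i)
  omega

lemma MinGens.exists_eq_sum (hg : S.MinGens g) {s : ℕ} (hs : s ∈ S.carrier) :
    ∃ lam : Fin ν → ℕ, s = ∑ i, lam i * g i := by
  induction s using Nat.strong_induction_on with
  | _ s ih =>
    rcases eq_or_ne s 0 with rfl | hs0
    · exact ⟨0, by simp⟩
    by_cases hmin : S.IsMinGen s
    · obtain ⟨i, rfl⟩ : s ∈ Set.range g := by rw [hg.2]; exact hmin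
      exact ⟨Pi.single i 1, by simp [Pi.single_apply]⟩
    · obtain ⟨a, ha, b, hb, ha0, hb0, rfl⟩ :
          ∃ a ∈ S.carrier, ∃ b ∈ S.carrier, a ≠ 0 ∧ b ≠ 0 ∧ s = a + b := by
        by_contra h
        exact hmin ⟨hs, hs0, h⟩
      obtain ⟨la, rfl⟩ := ih a (by omega) ha
      obtain ⟨lb, rfl⟩ := ih b (by omega) hb
      exact ⟨la + lb, by simp only [Pi.add_apply, add_mul, sum_add_distrib]⟩

end MinGens

section Rect

variable {ν : ℕ} {g : Fin ν → ℕ}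

def rectCorner (g c : Fin ν → ℕ) : ℕ :=
  ∑ i ∈ univ.filter (fun i : Fin ν => i.val ≠ 0), c i * g i

lemma sum_filter_val_ne_zero_eq_sum {lam : Fin ν → ℕ}
    (h0 : ∀ i : Fin ν, i.val = 0 → lam i = 0) :
    ∑ i ∈ univ.filter (fun i : Fin ν => i.val ≠ 0), lam i * g i = ∑ i, lam i * g i :=
  sum_filter_of_ne fun i _ hi => fun hi0 => hi (by simp [h0 i hi0])

lemma rect_subset_carrier {S : NumSgp} (hg : ∀ i, g i ∈ S.carrier) (c : Fin ν → ℕ) :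
    rect g c ⊆ S.carrier := by
  rintro _ ⟨lam, -, -, rfl⟩
  exact sum_mul_mem hg _ lam

lemma rectCorner_mem_rect (c : Fin ν → ℕ) : rectCorner g c ∈ rect g c := by
  classical
  refine ⟨fun i => if i.val = 0 then 0 else c i, fun i hi => by simp [hi],
    fun i => by dsimp only; split_ifs <;> simp, ?_⟩
  rw [← sum_filter_val_ne_zero_eq_sum (fun i hi => by simp [hi])]
  exact sum_congr rfl fun i hi => by simp [(mem_filter.1 hi).2]

lemma sle_rectCorner_of_mem_rect {S : NumSgp} (hg : ∀ i, g i ∈ S.carrier) {c : Fin ν → ℕ}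
    {s : ℕ} (hs : s ∈ rect g c) : S.sle s (rectCorner g c) := by
  obtain ⟨lam, hlam0, hlamc, rfl⟩ := hs
  refine ⟨∑ i ∈ univ.filter (fun i : Fin ν => i.val ≠ 0), (c i - lam i) * g i,
    sum_mul_mem hg _ _, ?_⟩
  rw [← sum_filter_val_ne_zero_eq_sum hlam0, rectCorner, ← sum_add_distrib]
  exact sum_congr rfl fun i _ => by rw [← add_mul, Nat.add_sub_cancel' (hlamc i)]

lemma le_rectCorner_of_mem_rect {S : NumSgp} (hg : ∀ i, g i ∈ S.carrier) {c : Fin ν → ℕ}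
    {s : ℕ} (hs : s ∈ rect g c) : s ≤ rectCorner g c := by
  obtain ⟨u, -, hu⟩ := sle_rectCorner_of_mem_rect hg hs
  omega

end Rect

section Alpha

variable {S : NumSgp} {ν : ℕ} {g : Fin ν → ℕ} {f : ℤ}

lemma le_alpha (hg : S.MinGens g) (hf : S.IsFrob f) {i : Fin ν} {h : ℕ}
    (hh : h * g i ∈ S.Apery S.mult) : h ≤ S.alpha g i := by
  refine le_csSup ⟨(f + S.mult).toNat, fun k hk => ?_⟩ hh
  have := hf.le_add_mult hk
  have := Nat.le_mul_of_pos_right k (Nat.pos_of_ne_zero (hg.ne_zero i))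
  omega

lemma apery_subset_rect_alpha (hg : S.MinGens g) (hf : S.IsFrob f) :
    S.Apery S.mult ⊆ rect g (S.alpha g) := by
  classical
  intro w hw
  obtain ⟨lam, hlam⟩ := hg.exists_eq_sum hw.1
  have hterm : ∀ i, lam i * g i ∈ S.Apery S.mult := fun i =>
    mem_apery_of_sle (mul_mem _ (hg.mem i))
      ⟨_, sum_mul_mem hg.mem (univ.erase i) lam,
        by rw [hlam, ← add_sum_erase _ _ (mem_univ i)]⟩ hw
  refine ⟨lam, fun i hi => ?_, fun i => le_alpha hg hf (hterm i), hlam⟩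
  exact eq_zero_of_mul_mult_mem_apery (hg.eq_mult hi ▸ hterm i)

end Alpha

end NumSgp

/-- `Ap(S, m)` is α-rectangular iff `f + m = Σ_{i≥2} α_i g_i`. -/
theorem stmt_3 (S : NumSgp) (ν : ℕ) (g : Fin ν → ℕ) (hg : S.MinGens g)
    (f : ℤ) (hf : S.IsFrob f) :
    S.Apery S.mult = rect g (S.alpha g) ↔
      f + (S.mult : ℤ) = ∑ i ∈ Finset.univ.filter (fun i : Fin ν => i.val ≠ 0),
        (S.alpha g i : ℤ) * (g i : ℤ) := by
  have hcorner : ∑ i ∈ Finset.univ.filter (fun i : Fin ν => i.val ≠ 0),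
      (S.alpha g i : ℤ) * (g i : ℤ) = (rectCorner g (S.alpha g) : ℤ) := by
    simp [rectCorner]
  have hF := hf.toNat_add_mult_mem_apery
  have h0 := hf.add_mult_nonneg
  rw [hcorner]
  constructor
  · intro hAp
    have hle := hf.le_add_mult (hAp ▸ rectCorner_mem_rect (S.alpha g))
    have hge := le_rectCorner_of_mem_rect hg.mem (hAp ▸ hF)
    omega
  · intro heq
    refine (apery_subset_rect_alpha hg hf).antisymm fun s hs => ?_
    refine mem_apery_of_sle (rect_subset_carrier hg.mem _ hs)
      (sle_rectCorner_of_mem_rect hg.mem hs) ?_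
    rwa [show rectCorner g (S.alpha g) = (f + S.mult).toNat by omega]
end

section
/- Given integers m, ν with ν ≥ 2 and such that m has at least ν - 1 prime factors counted with multiplicity, there exists a numerical semigroup S with multiplicity m, embedding dimension ν, and α-rectangular Apéry set. -/
open NumSgp

/-!
Write `m = B₁ ⋯ B_{ν-1}` with every `Bⱼ ≥ 2` and let `r_k = B₁ ⋯ B_{k-1}` be the mixed-radix
place values, so `r₁ = 1` and `r_ν = m`. Take `S` generated by `m` and `m + r_k` for `1 ≤ k < ν`.
All generators lie in `[m, 2m)`, so they are the minimal generators and `m` is the multiplicity.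
Since `B_k (m + r_k) - m ∈ S`, every representation of an Apéry element has coefficients
`λ_k < B_k`, so `Ap(S, m)` lies in a box with at most `B₁ ⋯ B_{ν-1} = m` elements. But
`Ap(S, m)` has exactly `m` elements, one in each residue class mod `m`; hence it is the whole
box, and `α_k = B_k - 1`.
-/

open Finset

namespace NumSgp

variable (S : NumSgp) {n : ℕ}

lemma mul_mem_s18 (k : ℕ) {a : ℕ} (ha : a ∈ S.carrier) : k * a ∈ S.carrier := by
  induction k with
  | zero => simpa using S.zero_mem
  | succ k ih => simpa [add_mul] using S.add_mem _ ih _ ha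

lemma exists_forall_ge_mem : ∃ N, ∀ s, N ≤ s → s ∈ S.carrier := by
  obtain ⟨N, hN⟩ := S.cofinite.bddAbove
  exact ⟨N + 1, fun s hs => by_contra fun h => by have := hN h; omega⟩

variable {S}

lemma add_mul_notMem_Apery (hnS : n ∈ S.carrier) {w k : ℕ} (hw : w ∈ S.carrier) (hk : 0 < k) :
    w + k * n ∉ S.Apery n := by
  refine fun h => h.2 ⟨w + (k - 1) * n, S.add_mem _ hw _ (S.mul_mem_s18 _ hnS), ?_⟩
  obtain ⟨k, rfl⟩ := Nat.exists_eq_add_of_lt hk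
  simp only [Nat.add_sub_cancel]
  ring

lemma mem_Apery_of_add {x y : ℕ} (hx : x ∈ S.carrier) (hy : y ∈ S.carrier)
    (h : x + y ∈ S.Apery n) : x ∈ S.Apery n := by
  refine ⟨hx, fun ⟨t, ht, hxt⟩ => h.2 ⟨t + y, S.add_mem _ ht _ hy, by omega⟩⟩

lemma mod_injOn_Apery (hnS : n ∈ S.carrier) : Set.InjOn (· % n) (S.Apery n) := by
  suffices key : ∀ w ∈ S.Apery n, ∀ w' ∈ S.Apery n, w % n = w' % n → w ≤ w' → w = w' by
    intro w hw w' hw' h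
    rcases le_total w w' with hle | hle
    · exact key w hw w' hw' h hle
    · exact (key w' hw' w hw h.symm hle).symm
  intro w hw w' hw' h hle
  obtain ⟨k, hk⟩ : n ∣ w' - w := Nat.dvd_of_mod_eq_zero (Nat.sub_mod_eq_zero_of_mod_eq h.symm)
  rcases Nat.eq_zero_or_pos k with rfl | hk0
  · omega
  · have hw'eq : w' = w + k * n := by rw [mul_comm] at hk; omega
    exact absurd (hw'eq ▸ hw') (add_mul_notMem_Apery hnS hw.1 hk0)

lemma mod_image_Apery (hn : 0 < n) : (· % n) '' S.Apery n = Set.Iio n := by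
  classical
  refine Set.Subset.antisymm (Set.image_subset_iff.2 fun w _ => Nat.mod_lt w hn) fun r hr => ?_
  rw [Set.mem_Iio] at hr
  obtain ⟨N, hN⟩ := S.exists_forall_ge_mem
  have hex : ∃ k, r + k * n ∈ S.carrier := ⟨N, hN _ (by nlinarith)⟩
  refine ⟨r + Nat.find hex * n, ⟨Nat.find_spec hex, ?_⟩, ?_⟩
  · rintro ⟨t, ht, heq⟩
    obtain ⟨k, hk⟩ : ∃ k, Nat.find hex = k + 1 := by
      refine Nat.exists_eq_add_one.2 (Nat.pos_of_ne_zero fun h0 => ?_)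
      rw [h0] at heq; omega
    have htk : t = r + k * n := by rw [hk] at heq; linarith
    exact Nat.find_min hex (show k < Nat.find hex by omega) (htk ▸ ht)
  · simp [Nat.add_mul_mod_self_right, Nat.mod_eq_of_lt hr]

lemma ncard_Apery (hn : 0 < n) (hnS : n ∈ S.carrier) : (S.Apery n).ncard = n := by
  rw [← (mod_injOn_Apery hnS).ncard_image, mod_image_Apery hn, ← coe_range,
    Set.ncard_coe_finset, card_range]

end NumSgp

section Span

variable {ν : ℕ} (g : Fin ν → ℕ)

def natSpan : Set ℕ := {s | ∃ lam : Fin ν → ℕ, s = ∑ i, lam i * g i}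

variable {g}

lemma zero_mem_natSpan : 0 ∈ natSpan g := ⟨0, by simp⟩

lemma add_mem_natSpan {x y : ℕ} (hx : x ∈ natSpan g) (hy : y ∈ natSpan g) :
    x + y ∈ natSpan g := by
  obtain ⟨lam, rfl⟩ := hx
  obtain ⟨mu, rfl⟩ := hy
  exact ⟨lam + mu, by simp [add_mul, sum_add_distrib]⟩

lemma sum_single_mul (i : Fin ν) (h : ℕ) : ∑ j, (Pi.single i h : Fin ν → ℕ) j * g j = h * g i := by
  simp [Pi.single_apply]

lemma mul_mem_natSpan (h : ℕ) (i : Fin ν) : h * g i ∈ natSpan g :=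
  ⟨Pi.single i h, (sum_single_mul i h).symm⟩

lemma mem_natSpan (i : Fin ν) : g i ∈ natSpan g := by
  simpa using mul_mem_natSpan (g := g) 1 i

lemma sum_update_mul_add (lam : Fin ν → ℕ) (i : Fin ν) (b : ℕ) :
    ∑ j, Function.update lam i b j * g j + lam i * g i = ∑ j, lam j * g j + b * g i := by
  rw [← add_sum_erase _ _ (mem_univ i),
    ← add_sum_erase _ (fun j => lam j * g j) (mem_univ i),
    sum_congr rfl fun j hj => by rw [Function.update_of_ne (ne_of_mem_erase hj)],
    Function.update_self]
  ring

lemma natSpan_compl_finite_of_succ {i j : Fin ν} (hij : g j = g i + 1) :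
    (natSpan g)ᶜ.Finite := by
  refine (Set.finite_Iio (g i * g i)).subset fun s hs => by_contra fun hlt => hs ?_
  obtain ⟨a, ha⟩ : ∃ a, g i = a := ⟨_, rfl⟩
  rw [ha] at hij hlt
  have hle : s % a * a ≤ s / a * a := by
    rcases Nat.eq_zero_or_pos a with ha | ha
    · simp [ha]
    · have : a ≤ s / a := (Nat.le_div_iff_mul_le ha).2 (by simpa using hlt)
      exact Nat.mul_le_mul_right _ (by have := Nat.mod_lt s ha; omega)
  have hs : (s / a - s % a) * g i + s % a * g j = s := by
    rw [ha, hij, Nat.sub_mul, mul_add, mul_one]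
    have := Nat.div_add_mod' s a
    omega
  exact hs ▸ add_mem_natSpan (mul_mem_natSpan _ i) (mul_mem_natSpan _ j)

def ofGens (g : Fin ν → ℕ) (hg : (natSpan g)ᶜ.Finite) : NumSgp where
  carrier := natSpan g
  zero_mem := zero_mem_natSpan
  add_mem _ hx _ hy := add_mem_natSpan hx hy
  cofinite := hg

section Interval

variable {a : ℕ} (hlo : ∀ i, a ≤ g i)
include hlo

lemma le_of_mem_natSpan {s : ℕ} (hs : s ∈ natSpan g) (h0 : s ≠ 0) : a ≤ s := by
  obtain ⟨lam, rfl⟩ := hs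
  obtain ⟨j, -, hj⟩ := exists_ne_zero_of_sum_ne_zero h0
  calc a ≤ g j := hlo j
    _ ≤ lam j * g j := Nat.le_mul_of_pos_left _ (Nat.pos_of_ne_zero fun h => hj (by simp [h]))
    _ ≤ ∑ i, lam i * g i :=
      single_le_sum (f := fun i => lam i * g i) (fun i _ => Nat.zero_le _) (mem_univ j)

lemma mult_ofGens (hg : (natSpan g)ᶜ.Finite) {i : Fin ν} (hi : g i = a) (ha : 0 < a) :
    (ofGens g hg).mult = a :=
  IsLeast.csInf_eq ⟨⟨hi ▸ mem_natSpan i, by omega⟩,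
    fun _ hs => le_of_mem_natSpan hlo hs.1 hs.2⟩

lemma isMinGen_ofGens_iff (hhi : ∀ i, g i < 2 * a) (hg : (natSpan g)ᶜ.Finite) {s : ℕ} :
    (ofGens g hg).IsMinGen s ↔ s ∈ Set.range g := by
  constructor
  · rintro ⟨⟨lam, rfl⟩, h0, hirr⟩
    obtain ⟨j, -, hj⟩ := exists_ne_zero_of_sum_ne_zero h0
    have hsplit := sum_update_mul_add (g := g) lam j (lam j - 1)
    rw [Nat.sub_one_mul] at hsplit
    have hgj : g j ≤ lam j * g j :=
      Nat.le_mul_of_pos_left _ (Nat.pos_of_ne_zero (left_ne_zero_of_mul hj))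
    set rest := ∑ k, Function.update lam j (lam j - 1) k * g k
    by_cases hrest : rest = 0
    · exact ⟨j, by omega⟩
    · exact absurd ⟨g j, mem_natSpan j, rest,
        ⟨_, rfl⟩, right_ne_zero_of_mul hj, hrest, by omega⟩ hirr
  · rintro ⟨i, rfl⟩
    refine ⟨mem_natSpan i, by have := hlo i; have := hhi i; omega, ?_⟩
    rintro ⟨x, hx, y, hy, hx0, hy0, hxy⟩
    have := le_of_mem_natSpan hlo hx hx0
    have := le_of_mem_natSpan hlo hy hy0
    have := hhi i
    omega

end Interval

end Span

section Rect

variable {ν : ℕ} (g c : Fin ν → ℕ)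

lemma rect_eq_image : rect g c = (fun lam : Fin ν → ℕ => ∑ i, lam i * g i) ''
    ↑(Fintype.piFinset fun i : Fin ν => if i.val = 0 then {0} else range (c i + 1)) := by
  ext s
  simp only [rect, Set.mem_ofPred_eq, Set.mem_image, mem_coe, Fintype.mem_piFinset]
  constructor
  · rintro ⟨lam, h0, hc, rfl⟩
    refine ⟨lam, fun i => ?_, rfl⟩
    split_ifs with hi
    · simp [h0 i hi]
    · simpa [Nat.lt_succ_iff] using hc i
  · rintro ⟨lam, hlam, rfl⟩
    refine ⟨lam, fun i hi => by simpa [hi] using hlam i, fun i => ?_, rfl⟩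
    have := hlam i
    split_ifs at this with hi
    · simp_all
    · simpa [Nat.lt_succ_iff] using this

lemma rect_finite : (rect g c).Finite := by
  rw [rect_eq_image]; exact Set.Finite.image _ (finite_toSet _)

lemma ncard_rect_le : (rect g c).ncard ≤ piProd c := by
  rw [rect_eq_image]
  refine (Set.ncard_image_le (finite_toSet _)).trans_eq ?_
  rw [Set.ncard_coe_finset, Fintype.card_piFinset, piProd, prod_filter]
  exact prod_congr rfl fun i _ => by split_ifs <;> simp_all

variable {g c}

lemma rect_congr {c' : Fin ν → ℕ} (h : ∀ i, i.val ≠ 0 → c i = c' i) : rect g c = rect g c' := by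
  suffices ∀ c c' : Fin ν → ℕ, (∀ i, i.val ≠ 0 → c i = c' i) → rect g c ⊆ rect g c' from
    (this c c' h).antisymm (this c' c fun i hi => (h i hi).symm)
  rintro c c' h s ⟨lam, h0, hc, rfl⟩
  refine ⟨lam, h0, fun i => ?_, rfl⟩
  by_cases hi : i.val = 0
  · simp [h0 i hi]
  · exact h i hi ▸ hc i

lemma mul_mem_rect {i : Fin ν} (hi : i.val ≠ 0) {h : ℕ} (hh : h ≤ c i) : h * g i ∈ rect g c := by
  refine ⟨Pi.single i h, fun j hj => ?_, fun j => ?_, (sum_single_mul i h).symm⟩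
  · exact Pi.single_eq_of_ne (by rintro rfl; exact hi hj) _
  · rcases eq_or_ne j i with rfl | hji
    · simpa using hh
    · simp [Pi.single_eq_of_ne hji]

end Rect

namespace NumSgp

variable {S : NumSgp} {ν n : ℕ} {g c : Fin ν → ℕ}
  (hS : S.carrier = natSpan g) (hnS : n ∈ S.carrier)
  (hc : ∀ i : Fin ν, i.val ≠ 0 → ∃ t ∈ S.carrier, (c i + 1) * g i = t + n)

include hS hnS hc in
lemma le_of_mul_mem_Apery {i : Fin ν} (hi : i.val ≠ 0) {h : ℕ} (hh : h * g i ∈ S.Apery n) :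
    h ≤ c i := by
  by_contra! hlt
  obtain ⟨t, ht, hteq⟩ := hc i hi
  have hgi : g i ∈ S.carrier := hS ▸ mem_natSpan i
  refine add_mul_notMem_Apery hnS (S.add_mem _ (S.mul_mem_s18 (h - (c i + 1)) hgi) _ ht)
    one_pos ?_
  convert hh using 1
  rw [one_mul, add_assoc, ← hteq, ← add_mul, Nat.sub_add_cancel hlt]

include hS hnS hc in
lemma Apery_subset_rect (hg0 : ∀ i : Fin ν, i.val = 0 → g i = n) : S.Apery n ⊆ rect g c := by
  intro w hw
  obtain ⟨lam, hlam⟩ : w ∈ natSpan g := hS ▸ hw.1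
  have hsummand : ∀ i, lam i * g i ∈ S.Apery n := by
    intro i
    have hsplit := sum_update_mul_add (g := g) lam i 0
    rw [zero_mul, add_zero, ← hlam, add_comm] at hsplit
    exact mem_Apery_of_add (hS ▸ mul_mem_natSpan _ i) (hS ▸ ⟨_, rfl⟩) (hsplit ▸ hw)
  have hlam0 : ∀ i : Fin ν, i.val = 0 → lam i = 0 := by
    intro i hi
    by_contra! h0
    have := hsummand i
    rw [hg0 i hi, ← zero_add (lam i * n)] at this
    exact add_mul_notMem_Apery hnS S.zero_mem (Nat.pos_of_ne_zero h0) this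
  refine ⟨lam, hlam0, fun i => ?_, hlam⟩
  by_cases hi : i.val = 0
  · simp [hlam0 i hi]
  · exact le_of_mul_mem_Apery hS hnS hc hi (hsummand i)

include hS hnS hc in
lemma Apery_eq_rect (hn : 0 < n) (hg0 : ∀ i : Fin ν, i.val = 0 → g i = n)
    (hcard : piProd c ≤ n) : S.Apery n = rect g c :=
  Set.eq_of_subset_of_ncard_le (Apery_subset_rect hS hnS hc hg0)
    ((ncard_rect_le g c).trans (hcard.trans (ncard_Apery hn hnS).ge)) (rect_finite g c)

include hS hnS hc in
lemma Apery_mult_eq_rect_alpha (hmult : S.mult = n) (hn : 0 < n)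
    (hg0 : ∀ i : Fin ν, i.val = 0 → g i = n) (hcard : piProd c ≤ n) :
    S.Apery S.mult = rect g (S.alpha g) := by
  have hAp := Apery_eq_rect hS hnS hc hn hg0 hcard
  rw [hmult, hAp]
  refine rect_congr fun i hi => ?_
  have hset : {h | h * g i ∈ S.Apery S.mult} = Set.Iic (c i) := by
    ext h
    rw [hmult, Set.mem_ofPred_eq, Set.mem_Iic]
    exact ⟨le_of_mul_mem_Apery hS hnS hc hi, fun hh => hAp ▸ mul_mem_rect hi hh⟩
  rw [alpha, hset, csSup_Iic]

end NumSgp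

section MixedRadix

variable (B : ℕ → ℕ)

def placeValue (k : ℕ) : ℕ := ∏ j ∈ Ico 1 k, B j

def mixedRadixGens (ν : ℕ) (i : Fin ν) : ℕ :=
  if i.val = 0 then placeValue B ν else placeValue B ν + placeValue B i

variable {B}

lemma placeValue_one : placeValue B 1 = 1 := by simp [placeValue]

lemma placeValue_succ {k : ℕ} (hk : 1 ≤ k) : placeValue B (k + 1) = placeValue B k * B k :=
  prod_Ico_succ_top hk B

variable (hB : ∀ j, 2 ≤ B j)
include hB

lemma placeValue_pos (k : ℕ) : 0 < placeValue B k :=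
  prod_pos fun j _ => by have := hB j; omega

lemma placeValue_lt_placeValue {a b : ℕ} (ha : 1 ≤ a) (hab : a < b) :
    placeValue B a < placeValue B b := by
  induction b, hab using Nat.le_induction with
  | base => rw [placeValue_succ ha]; nlinarith [hB a, placeValue_pos hB a]
  | succ b hab ih =>
    rw [placeValue_succ (by omega)]; nlinarith [hB b, placeValue_pos hB b]

lemma mixedRadixGens_strictMono (ν : ℕ) : StrictMono (mixedRadixGens B ν) := by
  intro i j hij
  have hj : j.val ≠ 0 := by have : i.val < j.val := hij; omega
  unfold mixedRadixGens
  rw [if_neg hj]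
  split_ifs with hi
  · have := placeValue_pos hB j.val; omega
  · have := placeValue_lt_placeValue hB (Nat.one_le_iff_ne_zero.2 hi) hij; omega

lemma mixedRadixGens_lt (ν : ℕ) (i : Fin ν) :
    mixedRadixGens B ν i < 2 * placeValue B ν := by
  have := placeValue_pos hB ν
  unfold mixedRadixGens
  split_ifs with hi
  · omega
  · have := placeValue_lt_placeValue hB (Nat.one_le_iff_ne_zero.2 hi) i.isLt; omega

omit hB in
lemma le_mixedRadixGens (ν : ℕ) (i : Fin ν) : placeValue B ν ≤ mixedRadixGens B ν i := by
  unfold mixedRadixGens; split_ifs <;> omega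

-- `B_k g_k` is `(B_k - 1) m + g_{k+1}`, or `(B_k + 1) m` for the last generator.
lemma mul_mixedRadixGens_eq_add {ν : ℕ} {i : Fin ν} (hi : i.val ≠ 0) :
    ∃ t ∈ natSpan (mixedRadixGens B ν), B i * mixedRadixGens B ν i = t + placeValue B ν := by
  have h0 : 0 < ν := by omega
  have hm : mixedRadixGens B ν ⟨0, h0⟩ = placeValue B ν := rfl
  have hstep : B i * mixedRadixGens B ν i = B i * placeValue B ν + placeValue B (i + 1) := by
    rw [mixedRadixGens, if_neg hi, placeValue_succ (Nat.one_le_iff_ne_zero.2 hi)]; ring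
  obtain ⟨b, hb⟩ : ∃ b, B i = b + 2 := ⟨B i - 2, by have := hB i; omega⟩
  by_cases hlast : i.val + 1 < ν
  · have hnext : mixedRadixGens B ν ⟨i + 1, hlast⟩ = placeValue B ν + placeValue B (i + 1) := rfl
    refine ⟨b * mixedRadixGens B ν ⟨0, h0⟩ + mixedRadixGens B ν ⟨i + 1, hlast⟩,
      add_mem_natSpan (mul_mem_natSpan _ _) (mem_natSpan _), ?_⟩
    rw [hstep, hm, hnext, hb]; ring
  · refine ⟨B i * mixedRadixGens B ν ⟨0, h0⟩, mul_mem_natSpan _ _, ?_⟩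
    rw [hstep, hm, show i.val + 1 = ν by omega]

lemma piProd_pred_eq_placeValue (ν : ℕ) :
    piProd (fun i : Fin ν => B i - 1) = placeValue B ν := by
  rw [piProd, prod_filter,
    Fin.prod_univ_eq_prod_range (fun k => if k ≠ 0 then B k - 1 + 1 else 1), placeValue]
  rcases Nat.eq_zero_or_pos ν with rfl | hν
  · simp
  rw [range_eq_Ico, prod_eq_prod_Ico_succ_bot hν, if_neg (by simp), one_mul]
  exact prod_congr rfl fun k hk => by
    rw [if_pos (by simp at hk; omega), Nat.sub_add_cancel (by have := hB k; omega)]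

end MixedRadix

lemma exists_placeValue_eq_of_le_length {ν m : ℕ} (hν : 2 ≤ ν)
    (hm : ν - 1 ≤ m.primeFactorsList.length) :
    ∃ B : ℕ → ℕ, (∀ j, 2 ≤ B j) ∧ placeValue B ν = m := by
  induction ν, hν using Nat.le_induction generalizing m with
  | base =>
    have : 2 ≤ m := by
      by_contra h
      interval_cases m <;> simp_all
    exact ⟨fun _ => m, fun _ => this, by simp [placeValue]⟩
  | succ ν hν ih =>
    obtain ⟨n, rfl⟩ : ∃ n, m = n + 2 := by
      refine ⟨m - 2, (Nat.sub_add_cancel ?_).symm⟩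
      by_contra h
      interval_cases m <;> simp_all
    rw [Nat.primeFactorsList_add_two, List.length_cons] at hm
    obtain ⟨B, hB, hprod⟩ := ih (m := (n + 2) / (n + 2).minFac) (by omega)
    refine ⟨Function.update B ν (n + 2).minFac, fun j => ?_, ?_⟩
    · rcases eq_or_ne j ν with rfl | hj
      · simpa using (Nat.minFac_prime (by omega)).two_le
      · simpa [hj] using hB j
    · rw [placeValue_succ (by omega), Function.update_self, placeValue,
        prod_congr rfl fun j hj => Function.update_of_ne (by simp at hj; omega) _ B]
      exact (congrArg (· * _) hprod).trans (Nat.div_mul_cancel (Nat.minFac_dvd _))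

/-- Given `m, ν` with `ν ≥ 2` and `ℓ(m) ≥ ν - 1`, there is a numerical semigroup
with multiplicity `m`, embedding dimension `ν` and α-rectangular Apéry set. -/
theorem stmt_18 (m ν : ℕ) (hν : 2 ≤ ν) (hm : ν - 1 ≤ m.primeFactorsList.length) :
    ∃ (S : NumSgp) (g : Fin ν → ℕ), S.MinGens g ∧ S.mult = m ∧
      S.Apery S.mult = rect g (S.alpha g) := by
  obtain ⟨B, hB, rfl⟩ := exists_placeValue_eq_of_le_length hν hm
  set g := mixedRadixGens B ν
  have hm0 := placeValue_pos hB ν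
  have hg0 : ∀ i : Fin ν, i.val = 0 → g i = placeValue B ν := fun i hi => if_pos hi
  have hcof : (natSpan g)ᶜ.Finite := natSpan_compl_finite_of_succ (i := ⟨0, by omega⟩)
    (j := ⟨1, by omega⟩) (by simp [g, mixedRadixGens, placeValue_one])
  have hmult := mult_ofGens (le_mixedRadixGens ν) hcof (hg0 ⟨0, by omega⟩ rfl) hm0
  refine ⟨ofGens g hcof, g, ⟨mixedRadixGens_strictMono hB ν, ?_⟩, hmult, ?_⟩
  · ext s
    exact (isMinGen_ofGens_iff (le_mixedRadixGens ν) (mixedRadixGens_lt hB ν) hcof).symm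
  · refine Apery_mult_eq_rect_alpha (c := fun i => B i - 1) rfl
      (hg0 ⟨0, by omega⟩ rfl ▸ mem_natSpan _) (fun i hi => ?_) hmult hm0 hg0
      (piProd_pred_eq_placeValue hB ν).le
    rw [Nat.sub_add_cancel (by have := hB i; omega : 1 ≤ B i)]
    exact mul_mixedRadixGens_eq_add hB hi
end
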